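/- arXiv:2104.07596 — 4 statements merged into one kernel-verified Lean document; each statement's English description precedes it below -/
import Mathlib

section
/- In the field of rational functions ℚ(v), for every n ≥ 0: (1 − v²)·(1 + v + v²)^n · D_n(v/(1 + v + v²)) = 1 − v^{2n+2}. -/
open Polynomial

/-- `D 0 = 1`, `D 1 = 1 - z`, `D n = (1-z) D (n-1) - z^2 D (n-2)`. -/
noncomputable def D : ℕ → Polynomial ℚ
  | 0 => 1
  | 1 => 1 - X
  | (n + 2) => (1 - X) * D (n + 1) - X ^ 2 * D n

/-- In `ℚ(v)`: `(1 - v^2) (1+v+v^2)^n D_n(v/(1+v+v^2)) = 1 - v^(2n+2)`. -/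
theorem D_eval_ratfunc (n : ℕ) :
    (1 - (RatFunc.X : RatFunc ℚ) ^ 2) * (1 + RatFunc.X + RatFunc.X ^ 2) ^ n *
      Polynomial.aeval ((RatFunc.X : RatFunc ℚ) / (1 + RatFunc.X + RatFunc.X ^ 2)) (D n)
    = 1 - (RatFunc.X : RatFunc ℚ) ^ (2 * n + 2) := by
  have hw : (1 + RatFunc.X + RatFunc.X ^ 2 : RatFunc ℚ) ≠ 0 := by
    have h0 : (1 + X + X ^ 2 : ℚ[X]) ≠ 0 := fun h => by simpa using congrArg (eval 0) h
    have h2 := RatFunc.algebraMap_ne_zero h0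
    simpa [map_add, map_pow, RatFunc.algebraMap_X] using h2
  induction n using Nat.twoStepInduction with
  | zero => simp [D]
  | one =>
    simp only [D, map_sub, map_one, aeval_X, pow_one]
    field_simp
    ring
  | more n ih1 ih2 =>
    simp only [D, map_sub, map_mul, map_one, map_pow, aeval_X]
    set v : RatFunc ℚ := RatFunc.X with hv
    set w : RatFunc ℚ := 1 + RatFunc.X + RatFunc.X ^ 2 with hwdef
    set A := (aeval (v / w)) (D n) with hA
    set B := (aeval (v / w)) (D (n + 1)) with hB
    have e2 : (1 - v ^ 2) * w ^ (n + 2) * ((1 - v / w) * B - (v / w) ^ 2 * A)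
        = (1 + v ^ 2) * ((1 - v ^ 2) * w ^ (n + 1) * B) - v ^ 2 * ((1 - v ^ 2) * w ^ n * A) := by
      field_simp
      ring
    rw [e2, ih2, ih1]
    ring
end

section
/- In the field of rational functions ℚ(v), for every n ≥ 0: (1 − v)·(1 + v + v²)^n · D*_n(v/(1 + v + v²)) = 1 − v^{2n+1}. -/
open Polynomial

/-- `D* 0 = 1`, `D* 1 = 1`, `D* n = D (n-1) - z^2 D (n-2)`. -/
noncomputable def Dstar : ℕ → Polynomial ℚ
  | 0 => 1
  | 1 => 1
  | (n + 2) => D (n + 1) - X ^ 2 * D n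

lemma hw : (1 + RatFunc.X + RatFunc.X ^ 2 : RatFunc ℚ) ≠ 0 := by
  have hp : (1 + X + X ^ 2 : Polynomial ℚ) ≠ 0 := by
    intro h
    have := congrArg (fun q => Polynomial.coeff q 0) h
    simp at this
  have := RatFunc.algebraMap_ne_zero hp
  simpa [map_add, map_pow, RatFunc.algebraMap_X] using this

lemma hx1 : (1 + RatFunc.X : RatFunc ℚ) ≠ 0 := by
  have hp : (1 + X : Polynomial ℚ) ≠ 0 := by
    intro h
    have := congrArg (fun q => Polynomial.coeff q 0) h
    simp at this
  have := RatFunc.algebraMap_ne_zero hp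
  simpa [map_add, RatFunc.algebraMap_X] using this

lemma Ekey (n : ℕ) :
    (1 - RatFunc.X ^ 2) * (1 + RatFunc.X + RatFunc.X ^ 2 : RatFunc ℚ) ^ n *
      Polynomial.aeval ((RatFunc.X : RatFunc ℚ) / (1 + RatFunc.X + RatFunc.X ^ 2)) (D n)
    = 1 - (RatFunc.X : RatFunc ℚ) ^ (2 * n + 2) := by
  induction n using Nat.twoStepInduction with
  | zero => simp [D]
  | one =>
      simp only [D, map_sub, map_one, aeval_X, pow_one]
      field_simp [hw]
      ring
  | more n ih ih1 =>
      set v : RatFunc ℚ := RatFunc.X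
      set w : RatFunc ℚ := 1 + RatFunc.X + RatFunc.X ^ 2 with hwdef
      simp only [D, map_sub, map_mul, map_one, map_pow, aeval_X]
      have hw0 : w ≠ 0 := hw
      set a := Polynomial.aeval (v / w) (D n)
      set b := Polynomial.aeval (v / w) (D (n + 1))
      have key : (1 - v ^ 2) * w ^ (n + 2) * ((1 - v / w) * b - (v / w) ^ 2 * a)
          = (1 + v ^ 2) * ((1 - v ^ 2) * w ^ (n + 1) * b) - v ^ 2 * ((1 - v ^ 2) * w ^ n * a) := by
        field_simp [hw0]
        ring
      rw [key, ih1, ih]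
      rw [show 2 * (n + 2) + 2 = (2 * (n + 1) + 2) + 2 by ring,
        show 2 * (n + 1) + 2 = (2 * n + 2) + 2 by ring]
      ring

/-- In `ℚ(v)`: `(1 - v) (1+v+v^2)^n D*_n(v/(1+v+v^2)) = 1 - v^(2n+1)`. -/
theorem Dstar_eval_ratfunc (n : ℕ) :
    (1 - (RatFunc.X : RatFunc ℚ)) * (1 + RatFunc.X + RatFunc.X ^ 2) ^ n *
      Polynomial.aeval ((RatFunc.X : RatFunc ℚ) / (1 + RatFunc.X + RatFunc.X ^ 2)) (Dstar n)
    = 1 - (RatFunc.X : RatFunc ℚ) ^ (2 * n + 1) := by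
  match n with
  | 0 => simp [Dstar]
  | 1 => simp [Dstar]; ring
  | n + 2 =>
      set v : RatFunc ℚ := RatFunc.X
      set w : RatFunc ℚ := 1 + RatFunc.X + RatFunc.X ^ 2 with hwdef
      have hw0 : w ≠ 0 := hw
      have ih := Ekey n
      have ih1 := Ekey (n + 1)
      apply mul_left_cancel₀ hx1
      simp only [Dstar, map_sub, map_mul, map_pow, aeval_X]
      set a := Polynomial.aeval (v / w) (D n)
      set b := Polynomial.aeval (v / w) (D (n + 1))
      have key : (1 + v) * ((1 - v) * w ^ (n + 2) * (b - (v / w) ^ 2 * a))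
          = w * ((1 - v ^ 2) * w ^ (n + 1) * b) - v ^ 2 * ((1 - v ^ 2) * w ^ n * a) := by
        field_simp [hw0]
        ring
      rw [key, ih1, ih, hwdef]
      ring
end

section
/- For all n ≥ 0 and h ≥ 0, the number of Motzkin paths of length n with height exactly h that have at least one horizontal step at level h equals S(n, 2h+3) − S(n, 2h+4), where for a ≥ 1, S(n, a) := ∑_{k≥1} [ T(n, n+2−k·a) − 2·T(n, n−k·a) + T(n, n−2−k·a) ] (a finite sum, since T(n, j) = 0 for j < 0). -/
open Finset
open scoped Classical

/-- A step: `+1`, `-1` or `0`. -/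
abbrev Step : Type := ({1, -1, 0} : Finset ℤ)

/-- Partial sum of the first `k` steps. -/
def psum {n : ℕ} (w : Fin n → Step) (k : ℕ) : ℤ :=
  ∑ i : Fin n, if (i : ℕ) < k then (w i : ℤ) else 0

/-- `w` is a Motzkin path: all partial sums are nonnegative and the total sum is `0`. -/
def IsMotzkin {n : ℕ} (w : Fin n → Step) : Prop :=
  (∀ k ∈ Finset.range (n + 1), 0 ≤ psum w k) ∧ psum w n = 0

/-- The height of a path: the maximum of its partial sums (`0` for the empty path). -/
def height {n : ℕ} (w : Fin n → Step) : ℤ :=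
  (Finset.range (n + 1)).sup' (Finset.nonempty_range_iff.mpr (Nat.succ_ne_zero n)) (psum w)

/-- `w` has a horizontal step at level `j`: some step is `0` and the partial sum up to
and including that step equals `j`. -/
def HasHorizAt {n : ℕ} (w : Fin n → Step) (j : ℤ) : Prop :=
  ∃ i : Fin n, (w i : ℤ) = 0 ∧ psum w ((i : ℕ) + 1) = j

/-- The trinomial coefficient `T n k`: the coefficient of `t^k` in `(1 + t + t^2)^n`,
extended by `0` for negative `k`. -/
noncomputable def T (n : ℕ) (k : ℤ) : ℤ :=
  if 0 ≤ k then ((1 + Polynomial.X + Polynomial.X ^ 2 : Polynomial ℤ) ^ n).coeff k.toNat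
  else 0

/-- `S n a = ∑_{k ≥ 1} (T n (n+2-k·a) - 2 T n (n-k·a) + T n (n-2-k·a))`; for `a ≥ 1`
all terms with `k > n + 2` vanish, so the sum may be truncated there. -/
noncomputable def S (n a : ℕ) : ℤ :=
  ∑ k ∈ Finset.Icc 1 (n + 2),
    (T n ((n : ℤ) + 2 - k * a) - 2 * T n ((n : ℤ) - k * a) + T n ((n : ℤ) - 2 - k * a))

/-!
A Motzkin path of height exactly `h` with a horizontal step at level `h` is a walk from `0` to
`0` in the strip `[0, h]` that is not free of horizontal steps at level `h`, so the count is the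
difference of two strip counts. Both satisfy the transfer recursion of the strip, with weight
`1`, resp. `0`, on horizontal steps at the top level, and so does the reflection-principle sum
of trinomial coefficients folded with period `2h + 4`, resp. `2h + 3`; the recursion has a
unique solution. At the start level `0`, pairing the terms `k` and `-k` with the symmetry
`T(n, k) = T(n, 2n - k)` turns the folded sum into `T(n, n) - T(n, n - 2) - S(n, a)`.
-/

section

open Polynomial

lemma T_of_neg {n : ℕ} {k : ℤ} (hk : k < 0) : T n k = 0 := by
  simp [T, not_le.mpr hk]

lemma T_of_lt {n : ℕ} {k : ℤ} (hk : 2 * (n : ℤ) < k) : T n k = 0 := by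
  have hdeg : ((1 + X + X ^ 2 : ℤ[X]) ^ n).natDegree ≤ 2 * n :=
    (natDegree_pow_le_of_le n (show (1 + X + X ^ 2 : ℤ[X]).natDegree ≤ 2 by
      compute_degree!)).trans (by omega)
  rw [T, if_pos (by omega)]
  exact coeff_eq_zero_of_natDegree_lt (by omega)

lemma mem_Icc_of_T_ne_zero {n : ℕ} {k : ℤ} (hk : T n k ≠ 0) : 0 ≤ k ∧ k ≤ 2 * n := by
  by_contra! h
  by_cases h0 : 0 ≤ k
  · exact hk (T_of_lt (h h0))
  · exact hk (T_of_neg (by omega))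

lemma T_zero_left (k : ℤ) : T 0 k = if k = 0 then 1 else 0 := by
  by_cases hk : 0 ≤ k
  · simp only [T, if_pos hk, pow_zero, coeff_one]
    grind
  · simp [T, hk]; omega

lemma T_sub_eq_coeff_mul_X_pow (n j : ℕ) {k : ℤ} (hk : 0 ≤ k) :
    T n (k - j) = ((1 + X + X ^ 2 : ℤ[X]) ^ n * X ^ j).coeff k.toNat := by
  rw [coeff_mul_X_pow', T]
  by_cases hj : (j : ℤ) ≤ k
  · rw [if_pos (by omega), if_pos (by omega)]
    congr 1
    omega
  · rw [if_neg (by omega), if_neg (by omega)]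

lemma T_succ (n : ℕ) (k : ℤ) : T (n + 1) k = T n k + T n (k - 1) + T n (k - 2) := by
  rcases lt_or_ge k 0 with hk | hk
  · simp [T_of_neg, hk, show k - 1 < 0 by omega, show k - 2 < 0 by omega]
  · have h0 := T_sub_eq_coeff_mul_X_pow n 0 hk
    have h1 := T_sub_eq_coeff_mul_X_pow n 1 hk
    have h2 := T_sub_eq_coeff_mul_X_pow n 2 hk
    push_cast at h0 h1 h2
    rw [sub_zero] at h0
    rw [h0, h1, h2, ← coeff_add, ← coeff_add, T, if_pos hk, pow_succ]
    ring_nf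

lemma T_symm (n : ℕ) (k : ℤ) : T n (2 * n - k) = T n k := by
  induction n generalizing k with
  | zero => simp only [T_zero_left]; grind
  | succ n ih =>
    rw [T_succ, T_succ, ← ih k, ← ih (k - 1), ← ih (k - 2)]
    push_cast
    ring_nf

open Function in
lemma hasFiniteSupport_T_sub_mul {a : ℕ} (ha : 0 < a) (n : ℕ) (c : ℤ) :
    HasFiniteSupport fun k : ℤ => T n (c - k * a) := by
  have hT : (support (T n)).Finite :=
    (Set.finite_Icc (0 : ℤ) (2 * n)).subset fun k hk => mem_Icc_of_T_ne_zero hk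
  have hinj : Injective fun k : ℤ => c - k * a := fun k l hkl => by
    simpa [ha.ne'] using hkl
  exact hT.preimage hinj.injOn

noncomputable def periodizedT (a n : ℕ) (c : ℤ) : ℤ := ∑ᶠ k : ℤ, T n (c - k * a)

lemma periodizedT_succ {a : ℕ} (ha : 0 < a) (n : ℕ) (c : ℤ) :
    periodizedT a (n + 1) c =
      periodizedT a n c + periodizedT a n (c - 1) + periodizedT a n (c - 2) := by
  have hshift (j : ℤ) (k : ℤ) : c - k * a - j = c - j - k * a := by ring
  simp only [periodizedT, T_succ, hshift]
  rw [finsum_add_distrib, finsum_add_distrib] <;>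
    first
    | exact hasFiniteSupport_T_sub_mul ha n _
    | exact (hasFiniteSupport_T_sub_mul ha n _).add (hasFiniteSupport_T_sub_mul ha n _)

lemma periodizedT_add_period (a n : ℕ) (c : ℤ) :
    periodizedT a n (c + a) = periodizedT a n c := by
  rw [periodizedT, ← finsum_comp_equiv (Equiv.addRight 1)]
  congr 1
  ext k
  simp only [Equiv.coe_addRight]
  ring_nf

lemma periodizedT_zero_length {a : ℕ} {c : ℤ} (hc0 : 0 ≤ c) (hca : c < a) :
    periodizedT a 0 c = if c = 0 then 1 else 0 := by
  rw [periodizedT, finsum_eq_single _ 0]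
  · simp [T_zero_left]
  · intro k hk
    rw [T_zero_left, if_neg]
    rcases lt_or_gt_of_ne hk with hk | hk <;> nlinarith

/-- Reflection principle: `j` is summed over its images under the group generated by the
reflections `x ↦ -2 - x` and `x ↦ a - 2 - x`. For `a = 2h + 4` this counts the walks from `j`
to `0` in `[0, h]`; for `a = 2h + 3` the upper wall sits at `h + 1/2`, which forbids horizontal
steps at level `h`. -/
noncomputable def reflectionSum (a n : ℕ) (j : ℤ) : ℤ :=
  periodizedT a n (n + j) - periodizedT a n (n - j - 2)

lemma reflectionSum_succ {a : ℕ} (ha : 0 < a) (n : ℕ) (j : ℤ) :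
    reflectionSum a (n + 1) j =
      reflectionSum a n (j - 1) + reflectionSum a n j + reflectionSum a n (j + 1) := by
  simp only [reflectionSum, periodizedT_succ ha]
  push_cast
  ring_nf

lemma reflectionSum_neg_one (a n : ℕ) : reflectionSum a n (-1) = 0 := by
  rw [reflectionSum]
  ring_nf

lemma reflectionSum_reflect (a n : ℕ) (j : ℤ) :
    reflectionSum a n (a - 2 - j) = -reflectionSum a n j := by
  have h₁ : (n : ℤ) + (a - 2 - j) = n - j - 2 + a := by ring
  have h₂ : (n : ℤ) + j = n + j - a + a := by ring
  rw [reflectionSum, reflectionSum, h₁, periodizedT_add_period, h₂, periodizedT_add_period]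
  ring_nf

lemma reflectionSum_zero_length {a : ℕ} {j : ℤ} (hj0 : 0 ≤ j) (hja : j + 3 ≤ a) :
    reflectionSum a 0 j = if j = 0 then 1 else 0 := by
  have h : (0 : ℤ) - j - 2 = a - j - 2 - a := by ring
  rw [reflectionSum, Nat.cast_zero, h, ← periodizedT_add_period a 0 (a - j - 2 - a),
    sub_add_cancel, zero_add, periodizedT_zero_length (c := j) hj0 (by omega),
    periodizedT_zero_length (c := a - j - 2) (by omega) (by omega),
    if_neg (show (a : ℤ) - j - 2 ≠ 0 by omega), sub_zero]

lemma sum_Icc_neg_eq_add_sum_Icc {M : Type*} [AddCommMonoid M] (f : ℤ → M) (N : ℕ) :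
    ∑ k ∈ Finset.Icc (-N : ℤ) N, f k = f 0 + ∑ k ∈ Finset.Icc 1 N, (f k + f (-k)) := by
  induction N with
  | zero => simp
  | succ N ih =>
    have hIcc : Finset.Icc (-(N + 1 : ℕ) : ℤ) (N + 1 : ℕ) =
        insert ((N : ℤ) + 1) (insert (-((N : ℤ) + 1)) (Finset.Icc (-N : ℤ) N)) := by
      ext k
      simp only [Finset.mem_Icc, Finset.mem_insert]
      omega
    rw [hIcc, Finset.sum_insert (by simp; omega), Finset.sum_insert (by simp), ih,
      Finset.sum_Icc_succ_top (by omega)]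
    push_cast
    abel

lemma finsum_int_eq_add_sum_Icc {M : Type*} [AddCommMonoid M] {f : ℤ → M} {N : ℕ}
    (hf : Function.support f ⊆ Set.Icc (-N : ℤ) N) :
    ∑ᶠ k, f k = f 0 + ∑ k ∈ Finset.Icc 1 N, (f k + f (-k)) := by
  rw [finsum_eq_sum_of_support_subset f (s := Finset.Icc (-N : ℤ) N) (by simpa),
    sum_Icc_neg_eq_add_sum_Icc]

lemma reflectionSum_zero_right {a : ℕ} (ha : 0 < a) (n : ℕ) :
    reflectionSum a n 0 = T n n - T n (n - 2) - S n a := by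
  set f : ℤ → ℤ := fun k => T n (n - k * a) - T n (n - 2 - k * a)
  have hsupp : Function.support f ⊆ Set.Icc (-(n + 2 : ℕ) : ℤ) (n + 2 : ℕ) := by
    intro k hk
    have hT : T n (n - k * a) ≠ 0 ∨ T n (n - 2 - k * a) ≠ 0 := by
      by_contra! h
      exact hk (by simp [f, h.1, h.2])
    have : -(n : ℤ) - 2 ≤ k * a ∧ k * a ≤ n := by
      rcases hT with hT | hT <;> have := mem_Icc_of_T_ne_zero hT <;> omega
    push_cast
    constructor <;> nlinarith
  have hsymm (c : ℤ) : T n (n + c) = T n (n - c) := by rw [← T_symm]; ring_nf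
  have hpair (k : ℤ) : f k + f (-k) =
      -(T n (n + 2 - k * a) - 2 * T n (n - k * a) + T n (n - 2 - k * a)) := by
    simp only [f, neg_mul, sub_neg_eq_add, hsymm,
      show (n : ℤ) - 2 + k * a = n + (k * a - 2) by ring]
    ring_nf
  have hfin := hasFiniteSupport_T_sub_mul ha n
  rw [reflectionSum, periodizedT, periodizedT, add_zero, show (n : ℤ) - 0 - 2 = n - 2 by ring,
    ← finsum_sub_distrib (hfin _) (hfin _), finsum_int_eq_add_sum_Icc hsupp]
  simp only [hpair, Finset.sum_neg_distrib, S, f]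
  ring_nf

/-- The recursion satisfied by the number `F n j` of walks of length `n` from level `j` to
level `0` inside `[0, h]`, in which a horizontal step at level `h` has weight `t`. -/
structure IsStripRecurrence (h t : ℤ) (F : ℕ → ℤ → ℤ) : Prop where
  init : ∀ j, 0 ≤ j → j ≤ h → F 0 j = if j = 0 then 1 else 0
  neg_one : ∀ n, F n (-1) = 0
  succ_of_lt : ∀ n j, 0 ≤ j → j < h → F (n + 1) j = F n (j - 1) + F n j + F n (j + 1)
  succ_top : ∀ n, F (n + 1) h = F n (h - 1) + t * F n h

lemma IsStripRecurrence.eq {h t : ℤ} {F G : ℕ → ℤ → ℤ} (hF : IsStripRecurrence h t F)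
    (hG : IsStripRecurrence h t G) (n : ℕ) {j : ℤ} (hj0 : 0 ≤ j) (hjh : j ≤ h) :
    F n j = G n j := by
  induction n generalizing j with
  | zero => rw [hF.init j hj0 hjh, hG.init j hj0 hjh]
  | succ n ih =>
    have ih' (j : ℤ) (hj : -1 ≤ j) (hjh : j ≤ h) : F n j = G n j := by
      rcases eq_or_lt_of_le hj with rfl | hj
      · rw [hF.neg_one, hG.neg_one]
      · exact ih (by omega) hjh
    rcases eq_or_lt_of_le hjh with rfl | hlt
    · rw [hF.succ_top, hG.succ_top, ih' _ (by omega) (by omega), ih' _ (by omega) le_rfl]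
    · rw [hF.succ_of_lt n j hj0 hlt, hG.succ_of_lt n j hj0 hlt, ih' _ (by omega) (by omega),
        ih' _ (by omega) hjh, ih' _ (by omega) (by omega)]

lemma isStripRecurrence_reflectionSum_two_mul_add_four (h : ℕ) :
    IsStripRecurrence h 1 (reflectionSum (2 * h + 4)) where
  init _ hj0 hjh := reflectionSum_zero_length hj0 (by push_cast; omega)
  neg_one := reflectionSum_neg_one _
  succ_of_lt n j _ _ := reflectionSum_succ (by omega) n j
  succ_top n := by
    have htop : reflectionSum (2 * h + 4) n (h + 1) = 0 := by
      have := reflectionSum_reflect (2 * h + 4) n (h + 1)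
      rw [show ((2 * h + 4 : ℕ) : ℤ) - 2 - (h + 1) = h + 1 by push_cast; ring] at this
      omega
    rw [reflectionSum_succ (by omega), htop]
    ring

lemma isStripRecurrence_reflectionSum_two_mul_add_three (h : ℕ) :
    IsStripRecurrence h 0 (reflectionSum (2 * h + 3)) where
  init _ hj0 hjh := reflectionSum_zero_length hj0 (by push_cast; omega)
  neg_one := reflectionSum_neg_one _
  succ_of_lt n j _ _ := reflectionSum_succ (by omega) n j
  succ_top n := by
    have htop : reflectionSum (2 * h + 3) n (h + 1) = -reflectionSum (2 * h + 3) n h := by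
      rw [← reflectionSum_reflect]
      push_cast
      ring_nf
    rw [reflectionSum_succ (by omega), htop]
    ring

lemma psum_zero {n : ℕ} (w : Fin n → Step) : psum w 0 = 0 := by
  simp [psum]

lemma psum_cons_succ {n : ℕ} (s : Step) (v : Fin n → Step) (k : ℕ) :
    psum (Fin.cons s v : Fin (n + 1) → Step) (k + 1) = s + psum v k := by
  simp [psum, Fin.sum_univ_succ]

lemma hasHorizAt_cons {n : ℕ} (s : Step) (v : Fin n → Step) (j : ℤ) :
    HasHorizAt (Fin.cons s v : Fin (n + 1) → Step) j ↔
      ((s : ℤ) = 0 ∧ j = 0) ∨ HasHorizAt v (j - s) := by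
  simp only [HasHorizAt, Fin.exists_fin_succ, Fin.cons_zero, Fin.cons_succ, Fin.val_zero,
    Fin.val_succ, psum_cons_succ, psum_zero]
  constructor <;> rintro (⟨hs, hj⟩ | ⟨i, hi, hj⟩) <;> first
    | exact Or.inl ⟨hs, by omega⟩
    | exact Or.inr ⟨i, hi, by omega⟩

lemma card_filter_fin_cons {α : Type*} [Fintype α] {n : ℕ} (p : (Fin (n + 1) → α) → Prop)
    [DecidablePred p] :
    #{w | p w} = ∑ s : α, #{v : Fin n → α | p (Fin.cons s v)} := by
  simp only [Finset.card_filter]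
  rw [← Fintype.sum_prod_type']
  exact (Fintype.sum_equiv (Fin.consEquiv fun _ => α) _ _ fun _ => rfl).symm

lemma sum_step {M : Type*} [AddCommMonoid M] (f : ℤ → M) :
    ∑ s : Step, f s = f 1 + f (-1) + f 0 := by
  rw [Finset.sum_coe_sort ({1, -1, 0} : Finset ℤ) f]
  simp [add_assoc]

def IsStripWalk (h : ℕ) (i : ℤ) {n : ℕ} (w : Fin n → Step) : Prop :=
  (∀ k ≤ n, 0 ≤ i + psum w k ∧ i + psum w k ≤ h) ∧ i + psum w n = 0

lemma isStripWalk_cons {h n : ℕ} {i : ℤ} (s : Step) (v : Fin n → Step) :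
    IsStripWalk h i (Fin.cons s v : Fin (n + 1) → Step) ↔
      (0 ≤ i ∧ i ≤ h) ∧ IsStripWalk h (i + s) v := by
  simp only [IsStripWalk, psum_cons_succ, ← add_assoc]
  constructor
  · rintro ⟨hk, hend⟩
    refine ⟨by simpa [psum_zero] using hk 0 (by omega), fun k hk' => ?_, hend⟩
    simpa [psum_cons_succ, ← add_assoc] using hk (k + 1) (by omega)
  · rintro ⟨hi, hk, hend⟩
    refine ⟨fun k hk' => ?_, hend⟩
    cases k with
    | zero => simpa [psum_zero] using hi
    | succ k => simpa [psum_cons_succ, ← add_assoc] using hk k (by omega)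

lemma isStripWalk_zero_length_iff {h : ℕ} {i : ℤ} (w : Fin 0 → Step) :
    IsStripWalk h i w ↔ i = 0 := by
  simp only [IsStripWalk, Nat.le_zero, forall_eq, psum_zero, add_zero]
  exact ⟨And.right, by rintro rfl; simp⟩

lemma IsStripWalk.mem_Icc {h n : ℕ} {i : ℤ} {w : Fin n → Step} (hw : IsStripWalk h i w) :
    0 ≤ i ∧ i ≤ h := by
  simpa [psum_zero] using hw.1 0 (Nat.zero_le n)

noncomputable def stripCount (h n : ℕ) (i : ℤ) : ℕ :=
  #{w : Fin n → Step | IsStripWalk h i w}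

-- `psum` is measured from the starting level `i`, so level `h` is `h - i` relative to it.
noncomputable def flatFreeStripCount (h n : ℕ) (i : ℤ) : ℕ :=
  #{w : Fin n → Step | IsStripWalk h i w ∧ ¬HasHorizAt w (h - i)}

lemma stripCount_of_not_mem {h n : ℕ} {i : ℤ} (hi : ¬(0 ≤ i ∧ i ≤ h)) :
    stripCount h n i = 0 := by
  rw [stripCount, Finset.card_eq_zero, Finset.filter_eq_empty_iff]
  exact fun w _ hw => hi hw.mem_Icc

lemma stripCount_zero_length (h : ℕ) (i : ℤ) : stripCount h 0 i = if i = 0 then 1 else 0 := by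
  simp [stripCount, isStripWalk_zero_length_iff, apply_ite]

lemma stripCount_succ {h n : ℕ} {i : ℤ} (hi : 0 ≤ i ∧ i ≤ h) :
    stripCount h (n + 1) i =
      stripCount h n (i - 1) + stripCount h n i + stripCount h n (i + 1) := by
  rw [stripCount, card_filter_fin_cons]
  simp only [isStripWalk_cons, hi, true_and]
  rw [sum_step fun s => #{v : Fin n → Step | IsStripWalk h (i + s) v}]
  simp only [stripCount, add_zero, ← sub_eq_add_neg]
  ring

lemma flatFreeStripCount_of_not_mem {h n : ℕ} {i : ℤ} (hi : ¬(0 ≤ i ∧ i ≤ h)) :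
    flatFreeStripCount h n i = 0 := by
  rw [flatFreeStripCount, Finset.card_eq_zero, Finset.filter_eq_empty_iff]
  exact fun w _ hw => hi hw.1.mem_Icc

lemma flatFreeStripCount_zero_length (h : ℕ) (i : ℤ) :
    flatFreeStripCount h 0 i = if i = 0 then 1 else 0 := by
  simp [flatFreeStripCount, isStripWalk_zero_length_iff, HasHorizAt, apply_ite]

lemma flatFreeStripCount_succ {h n : ℕ} {i : ℤ} (hi : 0 ≤ i ∧ i ≤ h) :
    flatFreeStripCount h (n + 1) i = flatFreeStripCount h n (i - 1) +
      (if i = h then 0 else flatFreeStripCount h n i) + flatFreeStripCount h n (i + 1) := by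
  rw [flatFreeStripCount, card_filter_fin_cons]
  simp only [isStripWalk_cons, hasHorizAt_cons, hi, true_and, not_or, sub_sub]
  rw [sum_step fun s => #{v : Fin n → Step | IsStripWalk h (i + s) v ∧
    ¬(s = 0 ∧ (h : ℤ) - i = 0) ∧ ¬HasHorizAt v (h - (i + s))}]
  by_cases hih : i = h
  · simp [hih, flatFreeStripCount, ← sub_eq_add_neg, add_comm]
  · simp [hih, sub_eq_zero, Ne.symm hih, flatFreeStripCount, ← sub_eq_add_neg, add_comm,
      add_left_comm]

lemma isStripRecurrence_stripCount (h : ℕ) :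
    IsStripRecurrence h 1 fun n i => stripCount h n i where
  init j _ _ := by simp [stripCount_zero_length, apply_ite]
  neg_one n := by simp [stripCount_of_not_mem]
  succ_of_lt n j hj0 hjh := by simp [stripCount_succ ⟨hj0, hjh.le⟩]
  succ_top n := by
    simp [stripCount_succ ⟨Nat.cast_nonneg h, le_rfl⟩, stripCount_of_not_mem]

lemma isStripRecurrence_flatFreeStripCount (h : ℕ) :
    IsStripRecurrence h 0 fun n i => flatFreeStripCount h n i where
  init j _ _ := by simp [flatFreeStripCount_zero_length, apply_ite]
  neg_one n := by simp [flatFreeStripCount_of_not_mem]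
  succ_of_lt n j hj0 hjh := by simp [flatFreeStripCount_succ ⟨hj0, hjh.le⟩, hjh.ne]
  succ_top n := by
    simp [flatFreeStripCount_succ ⟨Nat.cast_nonneg h, le_rfl⟩, flatFreeStripCount_of_not_mem]

lemma isStripWalk_zero_iff {h n : ℕ} (w : Fin n → Step) :
    IsStripWalk h 0 w ↔ IsMotzkin w ∧ height w ≤ h := by
  simp only [IsStripWalk, IsMotzkin, height, Finset.sup'_le_iff, Finset.mem_range,
    Nat.lt_succ_iff, zero_add, forall_and]
  tauto

lemma le_height_of_hasHorizAt {n : ℕ} {w : Fin n → Step} {j : ℤ} (hw : HasHorizAt w j) :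
    j ≤ height w := by
  obtain ⟨i, -, rfl⟩ := hw
  exact Finset.le_sup' (psum w) (Finset.mem_range.mpr (by omega))

lemma isMotzkin_and_height_eq_and_hasHorizAt_iff {h n : ℕ} (w : Fin n → Step) :
    IsMotzkin w ∧ height w = h ∧ HasHorizAt w h ↔ IsStripWalk h 0 w ∧ HasHorizAt w h := by
  rw [isStripWalk_zero_iff]
  exact ⟨fun ⟨hm, hh, hw⟩ => ⟨⟨hm, hh.le⟩, hw⟩,
    fun ⟨⟨hm, hh⟩, hw⟩ => ⟨hm, hh.antisymm (le_height_of_hasHorizAt hw), hw⟩⟩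

lemma card_isStripWalk_hasHorizAt (h n : ℕ) :
    (#{w : Fin n → Step | IsStripWalk h 0 w ∧ HasHorizAt w h} : ℤ) =
      stripCount h n 0 - flatFreeStripCount h n 0 := by
  have hsplit := Finset.card_filter_add_card_filter_not
    (s := {w : Fin n → Step | IsStripWalk h 0 w}) fun w => HasHorizAt w h
  rw [Finset.filter_filter, Finset.filter_filter] at hsplit
  rw [stripCount, flatFreeStripCount, ← hsplit, sub_zero]
  push_cast
  ring

/-- The number of Motzkin paths of length `n` with height exactly `h` having at least one
horizontal step at level `h` is `S n (2h+3) - S n (2h+4)`. -/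
theorem horiz_count_trinomial (n h : ℕ) :
    ((Finset.univ.filter fun w : Fin n → Step =>
      IsMotzkin w ∧ height w = (h : ℤ) ∧ HasHorizAt w (h : ℤ)).card : ℤ)
      = S n (2 * h + 3) - S n (2 * h + 4) := by
  rw [Finset.filter_congr fun w _ => isMotzkin_and_height_eq_and_hasHorizAt_iff w,
    card_isStripWalk_hasHorizAt,
    (isStripRecurrence_stripCount h).eq (isStripRecurrence_reflectionSum_two_mul_add_four h) n
      le_rfl (Nat.cast_nonneg h),
    (isStripRecurrence_flatFreeStripCount h).eq
      (isStripRecurrence_reflectionSum_two_mul_add_three h) n le_rfl (Nat.cast_nonneg h),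
    reflectionSum_zero_right (by omega), reflectionSum_zero_right (by omega)]
  ring
end
end

section
/- For real v with 0 < v < 1, the series L(v) := ∑_{h≥1} (−1)^{h−1} · v^h/(1 − v^h) converges, and (1 − v)·L(v) tends to log 2 as v → 1⁻. -/
open Filter Finset Real Topology

/-!
Grouping the terms of `L(v)` in pairs `h = 2k+1, 2k+2` and multiplying by `1 - v` gives
`∑ₖ v^n / ([n]_v [n+1]_v)` with `n = 2k+1` and `[n]_v = 1 + v + ⋯ + v^(n-1)`. Each term tends to
`1/(n(n+1))` as `v → 1⁻`, and AM–GM (`[n]_v ≥ n v^((n-1)/2)`) bounds it by that same limit for all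
`v ∈ (0, 1]`. By dominated convergence the limit is `∑ₖ 1/((2k+1)(2k+2)) = 1 - 1/2 + 1/3 - ⋯`,
which is `log 2` because its partial sums are `H_{2n} - H_n`.
-/

lemma sq_mul_pow_le_geom_sum_sq {v : ℝ} (hv : 0 ≤ v) (n : ℕ) :
    (n : ℝ) ^ 2 * v ^ (n - 1) ≤ (∑ i ∈ range n, v ^ i) ^ 2 := by
  calc (n : ℝ) ^ 2 * v ^ (n - 1) = (∑ _i ∈ range n, √(v ^ (n - 1))) ^ 2 := by
        rw [sum_const, card_range, nsmul_eq_mul, mul_pow, sq_sqrt (pow_nonneg hv _)]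
    _ ≤ (∑ i ∈ range n, v ^ i) * ∑ i ∈ range n, v ^ (n - 1 - i) := by
        refine sum_sq_le_sum_mul_sum_of_sq_le_mul _ (fun i _ ↦ pow_nonneg hv i)
          (fun i _ ↦ pow_nonneg hv _) fun i hi ↦ ?_
        rw [sq_sqrt (pow_nonneg hv _), ← pow_add, Nat.add_sub_cancel' (by simp at hi; omega)]
    _ = (∑ i ∈ range n, v ^ i) ^ 2 := by rw [sum_range_reflect (v ^ ·), sq]

lemma mul_succ_mul_pow_le_geom_sum_mul {v : ℝ} (h0 : 0 ≤ v) (h1 : v ≤ 1) (n : ℕ) :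
    n * (n + 1) * v ^ n ≤ (∑ i ∈ range n, v ^ i) * ∑ i ∈ range (n + 1), v ^ i := by
  refine (pow_le_pow_iff_left₀ (by positivity) (by positivity) two_ne_zero).mp ?_
  have hpow : v ^ (2 * n) ≤ v ^ (n - 1) * v ^ n := by
    rw [← pow_add]; exact pow_le_pow_of_le_one h0 h1 (by omega)
  have hn := sq_mul_pow_le_geom_sum_sq h0 n
  have hn1 := sq_mul_pow_le_geom_sum_sq h0 (n + 1)
  push_cast at hn1
  calc (n * (n + 1) * v ^ n : ℝ) ^ 2 = n ^ 2 * (n + 1) ^ 2 * v ^ (2 * n) := by ring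
    _ ≤ n ^ 2 * (n + 1) ^ 2 * (v ^ (n - 1) * v ^ n) :=
        mul_le_mul_of_nonneg_left hpow (by positivity)
    _ = (n ^ 2 * v ^ (n - 1)) * ((n + 1) ^ 2 * v ^ n) := by ring
    _ ≤ _ := by rw [mul_pow]; exact mul_le_mul hn hn1 (by positivity) (by positivity)

noncomputable def lambertPairTerm (n : ℕ) (v : ℝ) : ℝ :=
  v ^ n / ((∑ i ∈ range n, v ^ i) * ∑ i ∈ range (n + 1), v ^ i)

lemma lambertPairTerm_nonneg {v : ℝ} (hv : 0 ≤ v) (n : ℕ) : 0 ≤ lambertPairTerm n v := by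
  unfold lambertPairTerm; positivity

lemma lambertPairTerm_le {v : ℝ} (h0 : 0 < v) (h1 : v ≤ 1) {n : ℕ} (hn : n ≠ 0) :
    lambertPairTerm n v ≤ 1 / (n * (n + 1)) := by
  have hbound := mul_succ_mul_pow_le_geom_sum_mul h0.le h1 n
  have hpos : (0 : ℝ) < n * (n + 1) * v ^ n := by positivity
  rw [lambertPairTerm, div_le_div_iff₀ (hpos.trans_le hbound) (by positivity)]
  linarith

lemma tendsto_lambertPairTerm {n : ℕ} (hn : n ≠ 0) :
    Tendsto (lambertPairTerm n) (𝓝 1) (𝓝 (1 / (n * (n + 1)))) := by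
  have hcont : ContinuousAt (lambertPairTerm n) 1 :=
    (continuous_pow n).continuousAt.div (by fun_prop) (by simpa [hn] using n.cast_add_one_ne_zero)
  simpa [lambertPairTerm] using hcont.tendsto

lemma one_sub_mul_sub_eq_lambertPairTerm {v : ℝ} (h0 : 0 ≤ v) (h1 : v < 1) {n : ℕ}
    (hn : n ≠ 0) :
    (1 - v) * (v ^ n / (1 - v ^ n) - v ^ (n + 1) / (1 - v ^ (n + 1))) =
      lambertPairTerm n v := by
  have hS : (1 - v) * ∑ i ∈ range n, v ^ i ≠ 0 := by
    rw [mul_neg_geom_sum]; exact sub_ne_zero.mpr (pow_lt_one₀ h0 h1 hn).ne'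
  obtain ⟨hv, hSn⟩ := mul_ne_zero_iff.mp hS
  have hSn1 : v * ∑ i ∈ range n, v ^ i + 1 ≠ 0 := by positivity
  rw [lambertPairTerm, ← mul_neg_geom_sum, ← mul_neg_geom_sum, geom_sum_succ]
  field_simp
  ring

lemma summable_alternating_lambert {v : ℝ} (h0 : 0 ≤ v) (h1 : v < 1) :
    Summable (fun h : ℕ => (-1 : ℝ) ^ h * v ^ (h + 1) / (1 - v ^ (h + 1))) := by
  refine Summable.of_norm_bounded (g := fun h ↦ v ^ (h + 1) / (1 - v))
    (((summable_nat_add_iff 1).mpr (summable_geometric_of_lt_one h0 h1)).div_const _) fun h ↦ ?_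
  have hle : 1 - v ≤ 1 - v ^ (h + 1) := by
    linarith [pow_le_pow_of_le_one h0 h1.le (Nat.le_add_left 1 h), pow_one v]
  rw [norm_div, norm_mul, norm_pow, norm_neg, norm_one, one_pow, one_mul,
    Real.norm_of_nonneg (pow_nonneg h0 _), Real.norm_of_nonneg (by linarith)]
  exact div_le_div_of_nonneg_left (pow_nonneg h0 _) (by linarith) hle

lemma one_sub_mul_tsum_alternating_lambert {v : ℝ} (h0 : 0 ≤ v) (h1 : v < 1) :
    (1 - v) * ∑' h : ℕ, (-1 : ℝ) ^ h * v ^ (h + 1) / (1 - v ^ (h + 1)) =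
      ∑' k : ℕ, lambertPairTerm (2 * k + 1) v := by
  set f : ℕ → ℝ := fun h ↦ (-1 : ℝ) ^ h * v ^ (h + 1) / (1 - v ^ (h + 1))
  have hs : Summable f := summable_alternating_lambert h0 h1
  have heven : Summable fun k ↦ f (2 * k) := hs.comp_injective fun a b h ↦ by omega
  have hodd : Summable fun k ↦ f (2 * k + 1) := hs.comp_injective fun a b h ↦ by omega
  rw [← tsum_even_add_odd heven hodd, ← heven.tsum_add hodd, ← tsum_mul_left]
  refine tsum_congr fun k ↦ ?_
  simp only [f]
  rw [← one_sub_mul_sub_eq_lambertPairTerm h0 h1 (n := 2 * k + 1) (by omega),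
    (even_two_mul k).neg_one_pow, (even_two_mul k).add_one.neg_one_pow]
  ring

lemma sum_range_one_div_odd_mul_even (n : ℕ) :
    ∑ k ∈ range n, 1 / ((2 * k + 1) * (2 * k + 2) : ℝ) = harmonic (2 * n) - harmonic n := by
  induction n with
  | zero => simp
  | succ n ih =>
    rw [sum_range_succ, ih, mul_add_one, harmonic_succ, harmonic_succ, harmonic_succ]
    push_cast
    field_simp
    ring

lemma tendsto_harmonic_two_mul_sub_harmonic :
    Tendsto (fun n : ℕ ↦ (harmonic (2 * n) - harmonic n : ℝ)) atTop (𝓝 (log 2)) := by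
  have hγ := Real.tendsto_harmonic_sub_log
  have hlim := ((hγ.comp (tendsto_id.const_mul_atTop' two_pos)).sub hγ).add_const (log 2)
  rw [sub_self, zero_add] at hlim
  refine hlim.congr' ?_
  filter_upwards [eventually_ne_atTop 0] with n hn
  simp only [Function.comp_apply, id, Nat.cast_mul, Nat.cast_ofNat]
  rw [log_mul two_ne_zero (Nat.cast_ne_zero.mpr hn)]
  ring

lemma summable_one_div_odd_mul_even :
    Summable (fun k : ℕ ↦ 1 / ((2 * k + 1) * (2 * k + 2) : ℝ)) := by
  refine ((summable_nat_add_iff 1).mpr (summable_one_div_nat_pow.mpr one_lt_two)).of_nonneg_of_le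
    (fun k ↦ by positivity) fun k ↦ ?_
  rw [div_le_div_iff₀ (by positivity) (by positivity)]
  push_cast
  nlinarith

lemma hasSum_one_div_odd_mul_even :
    HasSum (fun k : ℕ ↦ 1 / ((2 * k + 1) * (2 * k + 2) : ℝ)) (log 2) := by
  rw [summable_one_div_odd_mul_even.hasSum_iff_tendsto_nat]
  simpa only [sum_range_one_div_odd_mul_even] using tendsto_harmonic_two_mul_sub_harmonic

/-- For `0 < v < 1` the series `L(v) = ∑_{h ≥ 1} (-1)^{h-1} v^h / (1 - v^h)` converges,
and `(1 - v) L(v) → log 2` as `v → 1⁻`. -/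
theorem lambert_alternating_asymptotics :
    (∀ v : ℝ, 0 < v → v < 1 →
      Summable (fun h : ℕ => (-1 : ℝ) ^ h * v ^ (h + 1) / (1 - v ^ (h + 1)))) ∧
    Tendsto
      (fun v : ℝ => (1 - v) * ∑' h : ℕ, (-1 : ℝ) ^ h * v ^ (h + 1) / (1 - v ^ (h + 1)))
      (nhdsWithin 1 (Set.Ioo 0 1)) (nhds (Real.log 2)) := by
  refine ⟨fun v h0 h1 ↦ summable_alternating_lambert h0.le h1, ?_⟩
  have hcast (k : ℕ) :
      ((2 * k + 1 : ℕ) * ((2 * k + 1 : ℕ) + 1) : ℝ) = (2 * k + 1) * (2 * k + 2) := by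
    push_cast; ring
  have hlim (k : ℕ) : Tendsto (lambertPairTerm (2 * k + 1)) (𝓝[Set.Ioo 0 1] 1)
      (𝓝 (1 / ((2 * k + 1) * (2 * k + 2)))) := by
    rw [← hcast]; exact (tendsto_lambertPairTerm (by omega)).mono_left nhdsWithin_le_nhds
  have hbound : ∀ᶠ v in 𝓝[Set.Ioo 0 1] 1, ∀ k : ℕ,
      ‖lambertPairTerm (2 * k + 1) v‖ ≤ 1 / ((2 * k + 1) * (2 * k + 2)) := by
    filter_upwards [self_mem_nhdsWithin] with v ⟨h0, h1⟩ k
    rw [Real.norm_of_nonneg (lambertPairTerm_nonneg h0.le _), ← hcast]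
    exact lambertPairTerm_le h0 h1.le (by omega)
  have hTannery := tendsto_tsum_of_dominated_convergence summable_one_div_odd_mul_even hlim hbound
  rw [hasSum_one_div_odd_mul_even.tsum_eq] at hTannery
  refine hTannery.congr' ?_
  filter_upwards [self_mem_nhdsWithin] with v ⟨h0, h1⟩
  exact (one_sub_mul_tsum_alternating_lambert h0.le h1).symm
end
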